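/- Let G be an AH-algebra and let g ∈ G with 0 ≤ g. Then there exists a unique element g^(1/2) ∈ G such that 0 ≤ g^(1/2) and (g^(1/2))² = g; moreover, g^(1/2) ∈ CC(g). -/

import Mathlib

/-- An e-ring `(R,E)`: an associative ring `R` with unity together with a set `E ⊆ R`
of effects, satisfying the Foulis axioms.  `E⁺` is realized as the additive submonoid
closure of `E` (the set of all finite sums of effects). -/
structure ERing (R : Type*) [Ring R] where
  E : Set R
  zero_mem : (0 : R) ∈ E
  one_mem : (1 : R) ∈ E
  compl_mem : ∀ e ∈ E, 1 - e ∈ E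
  epos_i : ∀ a ∈ AddSubmonoid.closure E, -a ∈ AddSubmonoid.closure E → a = 0
  epos_ii : ∀ a ∈ AddSubmonoid.closure E, 1 - a ∈ AddSubmonoid.closure E → a ∈ E
  epos_iii : ∀ a ∈ AddSubmonoid.closure E, ∀ b ∈ AddSubmonoid.closure E,
    a * b = b * a → a * b ∈ AddSubmonoid.closure E
  epos_iv : ∀ a ∈ AddSubmonoid.closure E, ∀ b ∈ AddSubmonoid.closure E,
    a * b * a ∈ AddSubmonoid.closure E
  epos_v : ∀ a ∈ AddSubmonoid.closure E, ∀ b ∈ AddSubmonoid.closure E,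
    a * b * a = 0 → a * b = 0 ∧ b * a = 0
  epos_vi : ∀ a ∈ AddSubmonoid.closure E, ∀ b ∈ AddSubmonoid.closure E,
    (a - b) ^ 2 ∈ AddSubmonoid.closure E
  zero_ne_one : (0 : R) ≠ 1

namespace ERing

variable {R : Type*} [Ring R] (er : ERing R)

/-- `E⁺`, the set of all finite sums of effects; the positive cone of the directed group. -/
def Epos : Set R := (AddSubmonoid.closure er.E : Set R)

/-- The directed group `G = E⁺ - E⁺` of the e-ring. -/
def G : Set R := {g | ∃ a ∈ er.Epos, ∃ b ∈ er.Epos, g = a - b}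

/-- The partial order on the directed group: `g ≤ h` iff `h - g ∈ E⁺`. -/
def le (g h : R) : Prop := h - g ∈ er.Epos

/-- The set of projections `P = {p ∈ G : p = p²}`. -/
def P : Set R := {p | p ∈ er.G ∧ p = p ^ 2}

/-- The commutant in `G` of a subset `A ⊆ G`. -/
def commutant (A : Set R) : Set R := {g | g ∈ er.G ∧ ∀ a ∈ A, g * a = a * g}

/-- The bicommutant in `G` of a subset `A ⊆ G`. -/
def CC (A : Set R) : Set R := er.commutant (er.commutant A)

/-- `s` is the supremum of `A` within the subset `S` (w.r.t. the e-ring order). -/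
def IsSupIn (S A : Set R) (s : R) : Prop :=
  s ∈ S ∧ (∀ a ∈ A, er.le a s) ∧ ∀ b ∈ S, (∀ a ∈ A, er.le a b) → er.le s b

/-- `s` is the infimum of `A` within the subset `S` (w.r.t. the e-ring order). -/
def IsInfIn (S A : Set R) (s : R) : Prop :=
  s ∈ S ∧ (∀ a ∈ A, er.le s a) ∧ ∀ b ∈ S, (∀ a ∈ A, er.le b a) → er.le b s

/-- Quadratic annihilation property. -/
def HasQA : Prop := ∀ g ∈ er.G, ∀ h ∈ er.G, g * h ^ 2 * g = 0 → g * h = 0 ∧ h * g = 0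

/-- Commutative Vigier property: every ascending sequence of pairwise commuting elements
of `G` bounded above in `G` has a supremum in `G` which double commutes with the sequence. -/
def HasCV : Prop :=
  ∀ g : ℕ → R, (∀ n, g n ∈ er.G) → (∀ n, er.le (g n) (g (n + 1))) →
    (∀ m n, g m * g n = g n * g m) → (∃ b ∈ er.G, ∀ n, er.le (g n) b) →
    ∃ s, er.IsSupIn er.G (Set.range g) s ∧ s ∈ er.CC (Set.range g)

/-- `G` is an abstract Hermitian (AH) algebra: there is a semitransparent effect `½`,
`G` has quadratic annihilation, and `G` has the commutative Vigier property. -/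
def IsAH : Prop := (∃ h ∈ er.E, h + h = 1) ∧ er.HasQA ∧ er.HasCV

end ERing

/-!
Scale `g` by a power of `½`, central as the inverse of `2`, so that `0 ≤ g ≤ 1`. The iteration
`b₀ = 0`, `bₖ₊₁ = bₖ + ½ (g - bₖ²)` stays in `[0, 1]` with `bₖ² ≤ g`, is increasing, and
its terms commute with everything commuting with `g`; the commutative Vigier property gives
its supremum `s`. Since `x ↦ x + ½ (g - x²)` is monotone on `[0, 1]`, both `s + ½ (g - s²)` and
`s - ½ (g - s²)` bound the sequence, so `½ (g - s²)` is `≥ 0` and `≤ 0`, whence `s² = g`.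
For uniqueness, if `a, b ≥ 0` commute and `a² = b²`, then `w = a - b` has `w² (a + b) = 0`,
hence `w² a = w² b = 0` by positivity, so `w³ = 0`, and quadratic annihilation forces `w = 0`.
-/

theorem commute_of_add_self_eq_one {R : Type*} [Ring R] {u : R} (hu : u + u = 1) (x : R) :
    Commute u x :=
  (Commute.ofNat_left 2 x).units_inv_left
    (u := ⟨2, u, by rw [two_mul, hu], by rw [mul_two, hu]⟩)

section SqrtApprox

variable {R : Type*} [Ring R] (u g : R)

def sqrtStep (x : R) : R := x + u * (g - x ^ 2)

def sqrtApprox : ℕ → R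
  | 0 => 0
  | k + 1 => sqrtStep u g (sqrtApprox k)

variable {u g}

theorem sqrtStep_sub_self (x : R) : sqrtStep u g x - x = u * (g - x ^ 2) :=
  add_sub_cancel_left x _

theorem sqrtStep_sub_sqrtStep {x y : R} (hxy : Commute x y) (hu : u + u = 1) :
    sqrtStep u g x - sqrtStep u g y = u * ((x - y) * ((1 - x) + (1 - y))) := by
  unfold sqrtStep
  linear_combination (norm := noncomm_ring) u * hxy.eq - hu * (x - y)

theorem one_sub_sqrtStep (hu : u + u = 1) (x : R) :
    1 - sqrtStep u g x = u * ((1 - x) ^ 2 + (1 - g)) := by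
  unfold sqrtStep
  linear_combination (norm := noncomm_ring) -hu * (1 - x)

theorem sub_sqrtStep_sq {x : R} (hxg : Commute x g) (hu : u + u = 1) :
    g - sqrtStep u g x ^ 2 = u * ((g - x ^ 2) * ((1 - sqrtStep u g x) + (1 - x))) := by
  unfold sqrtStep
  linear_combination (norm := noncomm_ring)
    -hu * (g - x ^ 2) - u * hxg.eq + (commute_of_add_self_eq_one hu x).eq * (g - x ^ 2)

theorem Commute.sqrtApprox_right {x : R} (hxu : Commute x u) (hxg : Commute x g) (k : ℕ) :
    Commute x (sqrtApprox u g k) := by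
  induction k with
  | zero => exact Commute.zero_right x
  | succ k ih => exact ih.add_right (hxu.mul_right (hxg.sub_right (ih.pow_right 2)))

theorem sqrtApprox_commute (hu : u + u = 1) (k : ℕ) : Commute (sqrtApprox u g k) g :=
  ((commute_of_add_self_eq_one hu g).symm.sqrtApprox_right (Commute.refl g) k).symm

theorem commute_sqrtApprox_sqrtApprox (hu : u + u = 1) (m n : ℕ) :
    Commute (sqrtApprox u g m) (sqrtApprox u g n) :=
  (commute_of_add_self_eq_one hu _).symm.sqrtApprox_right (sqrtApprox_commute hu m) n

end SqrtApprox

namespace ERing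

variable {R : Type*} [Ring R] (er : ERing R) {u g : R}

theorem zero_mem_Epos : (0 : R) ∈ er.Epos := AddSubmonoid.zero_mem _

theorem add_mem_Epos {a b : R} (ha : a ∈ er.Epos) (hb : b ∈ er.Epos) : a + b ∈ er.Epos :=
  add_mem ha hb

theorem mem_Epos_of_mem_E {a : R} (ha : a ∈ er.E) : a ∈ er.Epos :=
  AddSubmonoid.subset_closure ha

theorem one_mem_Epos : (1 : R) ∈ er.Epos := er.mem_Epos_of_mem_E er.one_mem

theorem nsmul_mem_Epos {a : R} (n : ℕ) (ha : a ∈ er.Epos) : n • a ∈ er.Epos :=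
  nsmul_mem (S := AddSubmonoid.closure er.E) ha n

theorem natCast_mem_Epos (n : ℕ) : (n : R) ∈ er.Epos := by
  simpa using er.nsmul_mem_Epos n er.one_mem_Epos

theorem eq_zero_of_mem_Epos_of_neg_mem_Epos {a : R} (ha : a ∈ er.Epos) (hna : -a ∈ er.Epos) :
    a = 0 :=
  er.epos_i a ha hna

theorem mul_mem_Epos_of_commute {a b : R} (ha : a ∈ er.Epos) (hb : b ∈ er.Epos)
    (hab : Commute a b) : a * b ∈ er.Epos :=
  er.epos_iii a ha b hb hab

theorem mem_G_of_mem_Epos {a : R} (ha : a ∈ er.Epos) : a ∈ er.G :=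
  ⟨a, ha, 0, er.zero_mem_Epos, (sub_zero a).symm⟩

theorem sub_mem_G {a b : R} (ha : a ∈ er.Epos) (hb : b ∈ er.Epos) : a - b ∈ er.G :=
  ⟨a, ha, b, hb, rfl⟩

theorem sq_mem_Epos {x : R} (hx : x ∈ er.G) : x ^ 2 ∈ er.Epos := by
  obtain ⟨a, ha, b, hb, rfl⟩ := hx
  exact er.epos_vi a ha b hb

theorem zero_le_iff {a : R} : er.le 0 a ↔ a ∈ er.Epos := by
  rw [ERing.le, sub_zero]

theorem exists_natCast_sub_mem_Epos {a : R} (ha : a ∈ er.Epos) :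
    ∃ n : ℕ, (n : R) - a ∈ er.Epos := by
  induction ha using AddSubmonoid.closure_induction with
  | mem e he => exact ⟨1, by simpa using er.mem_Epos_of_mem_E (er.compl_mem e he)⟩
  | zero => exact ⟨0, by simpa using er.zero_mem_Epos⟩
  | add a b _ _ iha ihb =>
    obtain ⟨m, hm⟩ := iha
    obtain ⟨n, hn⟩ := ihb
    refine ⟨m + n, ?_⟩
    rw [show ((m + n : ℕ) : R) - (a + b) = ((m : R) - a) + ((n : R) - b) by push_cast; abel]
    exact er.add_mem_Epos hm hn

theorem half_mul_mem_Epos (huE : u ∈ er.E) (hu : u + u = 1) {a : R} (ha : a ∈ er.Epos) :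
    u * a ∈ er.Epos :=
  er.mul_mem_Epos_of_commute (er.mem_Epos_of_mem_E huE) ha (commute_of_add_self_eq_one hu a)

theorem half_pow_mul_mem_Epos (huE : u ∈ er.E) (hu : u + u = 1) (n : ℕ) {a : R}
    (ha : a ∈ er.Epos) : u ^ n * a ∈ er.Epos := by
  induction n generalizing a with
  | zero => simpa using ha
  | succ n ih => simpa [pow_succ, mul_assoc] using ih (er.half_mul_mem_Epos huE hu ha)

theorem sqrtApprox_mem_Epos (huE : u ∈ er.E) (hu : u + u = 1) (hg : g ∈ er.Epos)
    (hg1 : 1 - g ∈ er.Epos) (k : ℕ) :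
    sqrtApprox u g k ∈ er.Epos ∧ 1 - sqrtApprox u g k ∈ er.Epos ∧
      g - sqrtApprox u g k ^ 2 ∈ er.Epos := by
  induction k with
  | zero => simpa [sqrtApprox] using ⟨er.zero_mem_Epos, er.one_mem_Epos, hg⟩
  | succ k ih =>
    obtain ⟨hb, hb1, hd⟩ := ih
    set b := sqrtApprox u g k
    have hdb : Commute (g - b ^ 2) b :=
      (sqrtApprox_commute hu k).symm.sub_left ((Commute.refl b).pow_left 2)
    have hdf : Commute (g - b ^ 2) (sqrtStep u g b) :=
      hdb.add_right ((commute_of_add_self_eq_one hu _).symm.mul_right (Commute.refl _))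
    have hf1 : 1 - sqrtStep u g b ∈ er.Epos := by
      rw [one_sub_sqrtStep hu]
      exact er.half_mul_mem_Epos huE hu
        (er.add_mem_Epos (er.sq_mem_Epos (er.sub_mem_G er.one_mem_Epos hb)) hg1)
    refine ⟨er.add_mem_Epos hb (er.half_mul_mem_Epos huE hu hd), hf1, ?_⟩
    rw [sqrtApprox, sub_sqrtStep_sq (sqrtApprox_commute hu k) hu]
    exact er.half_mul_mem_Epos huE hu (er.mul_mem_Epos_of_commute hd (er.add_mem_Epos hf1 hb1)
      (((Commute.one_right _).sub_right hdf).add_right ((Commute.one_right _).sub_right hdb)))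

theorem sqrtApprox_le_succ (huE : u ∈ er.E) (hu : u + u = 1) (hg : g ∈ er.Epos)
    (hg1 : 1 - g ∈ er.Epos) (k : ℕ) : er.le (sqrtApprox u g k) (sqrtApprox u g (k + 1)) := by
  rw [ERing.le, sqrtApprox, sqrtStep_sub_self]
  exact er.half_mul_mem_Epos huE hu (er.sqrtApprox_mem_Epos huE hu hg hg1 k).2.2

theorem sq_sub_sq_mem_Epos {a b : R} (ha : a ∈ er.Epos) (hb : b ∈ er.Epos)
    (hab : a - b ∈ er.Epos) (hc : Commute a b) : a ^ 2 - b ^ 2 ∈ er.Epos := by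
  rw [hc.sq_sub_sq]
  exact er.mul_mem_Epos_of_commute (er.add_mem_Epos ha hb) hab
    (((Commute.refl a).sub_left hc.symm).add_right (hc.sub_left (Commute.refl b))).symm

theorem sqrtStep_sub_sqrtStep_mem_Epos (huE : u ∈ er.E) (hu : u + u = 1) {x y : R}
    (hxy : x - y ∈ er.Epos) (hx1 : 1 - x ∈ er.Epos) (hy1 : 1 - y ∈ er.Epos)
    (hc : Commute x y) :
    sqrtStep u g x - sqrtStep u g y ∈ er.Epos := by
  rw [sqrtStep_sub_sqrtStep hc hu]
  exact er.half_mul_mem_Epos huE hu (er.mul_mem_Epos_of_commute hxy (er.add_mem_Epos hx1 hy1)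
    (((Commute.one_right _).sub_right ((Commute.refl x).sub_left hc.symm)).add_right
      ((Commute.one_right _).sub_right (hc.sub_left (Commute.refl y)))))

theorem sq_eq_of_isSupIn_range_sqrtApprox (huE : u ∈ er.E) (hu : u + u = 1)
    (hg : g ∈ er.Epos) (hg1 : 1 - g ∈ er.Epos) {s : R}
    (hs : er.IsSupIn er.G (Set.range (sqrtApprox u g)) s)
    (hsb : ∀ k, Commute s (sqrtApprox u g k)) : s ^ 2 = g := by
  obtain ⟨-, hbs, hleast⟩ := hs
  set b := sqrtApprox u g
  have hb := er.sqrtApprox_mem_Epos huE hu hg hg1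
  have hsb' : ∀ k, s - b k ∈ er.Epos := fun k => hbs _ ⟨k, rfl⟩
  have hs0 : s ∈ er.Epos := by simpa [b, sqrtApprox] using hsb' 0
  have hs1 : 1 - s ∈ er.Epos :=
    hleast 1 (er.mem_G_of_mem_Epos er.one_mem_Epos) (by rintro _ ⟨k, rfl⟩; exact (hb k).2.1)
  have hus2 : u * s ^ 2 ∈ er.Epos :=
    er.half_mul_mem_Epos huE hu (er.sq_mem_Epos (er.mem_G_of_mem_Epos hs0))
  have hug : u * g ∈ er.Epos := er.half_mul_mem_Epos huE hu hg
  -- `sqrtStep s ≥ sqrtStep bₖ = bₖ₊₁ ≥ bₖ`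
  have hnonneg : u * (g - s ^ 2) ∈ er.Epos := by
    rw [← sqrtStep_sub_self]
    refine hleast _ ?_ ?_
    · rw [sqrtStep, mul_sub, ← add_sub_assoc]
      exact er.sub_mem_G (er.add_mem_Epos hs0 hug) hus2
    · rintro _ ⟨k, rfl⟩
      rw [ERing.le, ← sub_add_sub_cancel _ (sqrtStep u g (b k)), sqrtStep_sub_self]
      exact er.add_mem_Epos (er.sqrtStep_sub_sqrtStep_mem_Epos huE hu (hsb' k) hs1 (hb k).2.1
        (hsb k)) (er.half_mul_mem_Epos huE hu (hb k).2.2)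
  -- `s ≥ bₖ₊₁ = bₖ + ½ (g - bₖ²) ≥ bₖ + ½ (g - s²)`
  have hnonpos : -(u * (g - s ^ 2)) ∈ er.Epos := by
    rw [← sub_sub_cancel_left s]
    refine hleast _ ?_ ?_
    · rw [mul_sub, sub_sub_eq_add_sub]
      exact er.sub_mem_G (er.add_mem_Epos hs0 hus2) hug
    · rintro _ ⟨k, rfl⟩
      rw [ERing.le, show s - u * (g - s ^ 2) - b k = (s - b (k + 1)) + u * (s ^ 2 - b k ^ 2) by
        simp only [b, sqrtApprox, sqrtStep]; noncomm_ring]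
      exact er.add_mem_Epos (hsb' (k + 1))
        (er.half_mul_mem_Epos huE hu (er.sq_sub_sq_mem_Epos hs0 (hb k).1 (hsb' k) (hsb k)))
  have hd : u * (g - s ^ 2) = 0 := er.eq_zero_of_mem_Epos_of_neg_mem_Epos hnonneg hnonpos
  rw [eq_comm, ← sub_eq_zero, ← one_mul (g - s ^ 2), ← hu, add_mul, hd, add_zero]

theorem exists_sqrt_mem_CC_of_le_one (hCV : er.HasCV) (huE : u ∈ er.E) (hu : u + u = 1)
    (hg : g ∈ er.Epos) (hg1 : 1 - g ∈ er.Epos) :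
    ∃ s ∈ er.Epos, s ^ 2 = g ∧ s ∈ er.CC {g} := by
  have hb := er.sqrtApprox_mem_Epos huE hu hg hg1
  have hbG : ∀ k, sqrtApprox u g k ∈ er.G := fun k => er.mem_G_of_mem_Epos (hb k).1
  obtain ⟨s, hsup, hsG, hsb⟩ := hCV _ hbG (er.sqrtApprox_le_succ huE hu hg hg1)
    (fun m n => (commute_sqrtApprox_sqrtApprox hu m n).eq)
    ⟨1, er.mem_G_of_mem_Epos er.one_mem_Epos, fun k => (hb k).2.1⟩
  have hsg : ∀ x ∈ er.commutant {g}, Commute s x := by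
    rintro x ⟨hxG, hxg⟩
    refine hsb x ⟨hxG, ?_⟩
    rintro _ ⟨k, rfl⟩
    exact (commute_of_add_self_eq_one hu x).symm.sqrtApprox_right (hxg g rfl) k
  have hbg : ∀ k, sqrtApprox u g k ∈ er.commutant {g} :=
    fun k => ⟨hbG k, by rintro _ rfl; exact sqrtApprox_commute hu k⟩
  refine ⟨s, er.zero_le_iff.1 (hsup.2.1 _ ⟨0, rfl⟩),
    er.sq_eq_of_isSupIn_range_sqrtApprox huE hu hg hg1 hsup (fun k => hsg _ (hbg k)), hsG, hsg⟩

theorem exists_sqrt_mem_CC (hCV : er.HasCV) (huE : u ∈ er.E) (hu : u + u = 1)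
    (hg : g ∈ er.Epos) : ∃ r ∈ er.Epos, r ^ 2 = g ∧ r ∈ er.CC {g} := by
  obtain ⟨n, hn⟩ := er.exists_natCast_sub_mem_Epos hg
  set p : R := 2 ^ n
  set q : R := u ^ n
  have hq : ∀ x, Commute q x := fun x => (commute_of_add_self_eq_one hu x).pow_left n
  have hp : ∀ x, Commute p x := fun x => (Commute.ofNat_left 2 x).pow_left n
  have hqp : q * p = 1 := by
    rw [← (commute_of_add_self_eq_one hu 2).mul_pow, mul_two, hu, one_pow]
  have hpq : p * q = 1 := (hq p).eq ▸ hqp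
  -- `g ≤ n ≤ p²`, so `q² g` lies between `0` and `1`
  have hpp : p * p - n ∈ er.Epos := by
    have hle : n ≤ 2 ^ n * 2 ^ n :=
      Nat.lt_two_pow_self.le.trans (Nat.le_mul_of_pos_left _ (by positivity))
    rw [show p * p - n = ((2 ^ n * 2 ^ n - n : ℕ) : R) by rw [Nat.cast_sub hle]; push_cast; rfl]
    exact er.natCast_mem_Epos _
  have hg' : q * (q * g) ∈ er.Epos :=
    er.half_pow_mul_mem_Epos huE hu n (er.half_pow_mul_mem_Epos huE hu n hg)
  have hg1' : 1 - q * (q * g) ∈ er.Epos := by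
    rw [show 1 - q * (q * g) = q * (q * ((p * p - n) + (n - g))) by
      rw [sub_add_sub_cancel, mul_sub, mul_sub, ← mul_assoc q p p, hqp, one_mul, hqp]]
    exact er.half_pow_mul_mem_Epos huE hu n
      (er.half_pow_mul_mem_Epos huE hu n (er.add_mem_Epos hpp hn))
  obtain ⟨s, hs, hs2, hsCC⟩ := er.exists_sqrt_mem_CC_of_le_one hCV huE hu hg' hg1'
  have hr : p * s ∈ er.Epos := by
    simpa [p, nsmul_eq_mul] using er.nsmul_mem_Epos (2 ^ n) hs
  refine ⟨p * s, hr, ?_, er.mem_G_of_mem_Epos hr, fun x hx => ?_⟩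
  · rw [(hp s).mul_pow, hs2, sq, mul_assoc, ← mul_assoc p q, hpq, one_mul, ← mul_assoc, hpq,
      one_mul]
  · have hx' : x ∈ er.commutant {q * (q * g)} := ⟨hx.1, by
      rintro _ rfl
      exact ((hq x).symm.mul_right ((hq x).symm.mul_right (hx.2 g rfl))).eq⟩
    exact (hp x).mul_left (hsCC.2 x hx')

theorem eq_of_sq_eq_sq (hQA : er.HasQA) {a b : R} (ha : a ∈ er.Epos) (hb : b ∈ er.Epos)
    (hab : Commute a b) (h : a ^ 2 = b ^ 2) : a = b := by
  set w := a - b with hw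
  have hwG : w ∈ er.G := er.sub_mem_G ha hb
  have hw2 : w ^ 2 ∈ er.Epos := er.sq_mem_Epos hwG
  have hwa : Commute (w ^ 2) a := ((Commute.refl a).sub_left hab.symm).pow_left 2
  have hwb : Commute (w ^ 2) b := (hab.sub_left (Commute.refl b)).pow_left 2
  have hab0 : (a + b) * w = 0 := by rw [hw, ← hab.sq_sub_sq, h, sub_self]
  have hsum : w ^ 2 * a + w ^ 2 * b = 0 := by
    rw [← mul_add, (hwa.add_right hwb).eq, sq, ← mul_assoc, hab0, zero_mul]
  have hwa0 : w ^ 2 * a = 0 := er.eq_zero_of_mem_Epos_of_neg_mem_Epos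
    (er.mul_mem_Epos_of_commute hw2 ha hwa)
    (by rw [neg_eq_of_add_eq_zero_right hsum]; exact er.mul_mem_Epos_of_commute hw2 hb hwb)
  have hwb0 : w ^ 2 * b = 0 := by rwa [hwa0, zero_add] at hsum
  have hw3 : w * w ^ 2 * w = 0 :=
    calc w * w ^ 2 * w = w ^ 2 * (a - b) * w := by rw [(Commute.self_pow w 2).eq]
      _ = 0 := by rw [mul_sub (w ^ 2) a b, hwa0, hwb0, sub_zero, zero_mul]
  have hww : w * w = 0 := (hQA w hwG w hwG hw3).1
  have hw0 : 1 * w = 0 := (hQA 1 (er.mem_G_of_mem_Epos er.one_mem_Epos) w hwG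
    (by rw [one_mul, mul_one, sq, hww])).1
  rwa [one_mul, hw, sub_eq_zero] at hw0

end ERing

theorem stmt2_general {R : Type*} [Ring R] (er : ERing R) (hAH : er.IsAH)
    (g : R) (hg0 : er.le 0 g) :
    ∃ r, (r ∈ er.G ∧ er.le 0 r ∧ r ^ 2 = g) ∧ r ∈ er.CC {g} ∧
      ∀ r', r' ∈ er.G → er.le 0 r' → r' ^ 2 = g → r' = r := by
  obtain ⟨⟨u, huE, hu⟩, hQA, hCV⟩ := hAH
  obtain ⟨r, hr, hr2, hrCC⟩ := er.exists_sqrt_mem_CC hCV huE hu (er.zero_le_iff.1 hg0)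
  refine ⟨r, ⟨hrCC.1, er.zero_le_iff.2 hr, hr2⟩, hrCC, fun r' hr'G hr' hr'2 => ?_⟩
  have hr'g : r' ∈ er.commutant {g} :=
    ⟨hr'G, by rintro _ rfl; rw [← hr'2]; exact (Commute.self_pow r' 2).eq⟩
  exact er.eq_of_sq_eq_sq hQA (er.zero_le_iff.1 hr') hr (hrCC.2 r' hr'g).symm
    (hr'2.trans hr2.symm)

/-- In an AH-algebra, every `0 ≤ g ∈ G` has a unique square root
`g^(1/2) ∈ G` with `0 ≤ g^(1/2)` and `(g^(1/2))² = g`; moreover `g^(1/2) ∈ CC(g)`. -/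
theorem stmt2 {R : Type*} [Ring R] (er : ERing R) (hAH : er.IsAH)
    (g : R) (hg : g ∈ er.G) (hg0 : er.le 0 g) :
    ∃ r, (r ∈ er.G ∧ er.le 0 r ∧ r ^ 2 = g) ∧ r ∈ er.CC {g} ∧
      ∀ r', r' ∈ er.G → er.le 0 r' → r' ^ 2 = g → r' = r :=
  stmt2_general er hAH g hg0
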